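/- Let d ≥ 1, let k : ℝᵈ × ℝᵈ → ℝ be measurable with ‖k‖_{L²} := sup_x (∫_{ℝᵈ} k(x, x−y)² dy)^{1/2} < ∞, let P and Q be Borel probability measures on ℝᵈ such that x ↦ k(x,y) is P-integrable and Q-integrable for every y, let g : ℝᵈ → ℝ be measurable with (∫ g²)^{1/2} ≤ 1, and let R ≥ 0 and a, b ≥ 0 with a + b = 1. Then |∫_{ℝᵈ} g(y)(Pk(y) − Qk(y)) dy| ≤ sup_{y∈ℝᵈ} |Pk(y) − Qk(y)| · Vol(R)^{1/2} + 2 τ_k(aR) + 2 ‖k‖_{L²} · max(τ_P(bR), τ_Q(bR)), where Vol(R) := π^{d/2} R^d / Γ(d/2 + 1) is the volume of the Euclidean ball of radius R in ℝᵈ. -/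

import Mathlib

open MeasureTheory

/-- The mean embedding of a probability measure `P` under the kernel `h`:
`Ph(y) = ∫ h(x,y) dP(x)`. -/
noncomputable def meanEmbed {d : ℕ}
    (P : Measure (EuclideanSpace ℝ (Fin d)))
    (h : EuclideanSpace ℝ (Fin d) → EuclideanSpace ℝ (Fin d) → ℝ)
    (y : EuclideanSpace ℝ (Fin d)) : ℝ :=
  ∫ x, h x y ∂P

/-- The kernel tail `τ_h(R) = sup_x (∫_{‖y‖ ≥ R} h(x, x−y)² dy)^{1/2}`. -/
noncomputable def kernelTail {d : ℕ}
    (h : EuclideanSpace ℝ (Fin d) → EuclideanSpace ℝ (Fin d) → ℝ) (R : ℝ) : ℝ :=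
  ⨆ x, Real.sqrt (∫ y in {y : EuclideanSpace ℝ (Fin d) | R ≤ ‖y‖}, (h x (x - y)) ^ 2)

/-- The measure tail `τ_P(R) = P({x : ‖x‖ ≥ R})`. -/
noncomputable def measTail {d : ℕ} (P : Measure (EuclideanSpace ℝ (Fin d))) (R : ℝ) : ℝ :=
  (P {x | R ≤ ‖x‖}).toReal

open Metric
open scoped ENNReal

/-! Split the integral at the ball `‖y‖ ≤ R`. On the ball, Cauchy–Schwarz gives
`S · Vol(R)^{1/2}`. Off the ball, bound `|Pk(y)| ≤ ∫ |k(x,y)| dP(x)`, exchange the integrals and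
apply Cauchy–Schwarz in `y` for each fixed `x`: what remains is the `L²` norm of `k(x, ·)` off the
ball. Substituting `y ↦ x - y`, it is at most `τ_k(aR)` when `‖x‖ ≤ bR`, because `‖x - y‖ > R`
then forces `‖y‖ ≥ aR`, and at most `‖k‖_{L²}` otherwise; integrating in `x` gives
`τ_k(aR) + ‖k‖_{L²} τ_P(bR)`. -/

section General

variable {α : Type*} [MeasurableSpace α] {μ : Measure α}

theorem eLpNorm_two_eq_ofReal_sqrt_integral_sq {f : α → ℝ}
    (hf : Integrable (fun y => f y ^ 2) μ) :
    eLpNorm f 2 μ = ENNReal.ofReal √(∫ y, f y ^ 2 ∂μ) := by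
  have hsq : ∀ y, ‖f y‖ₑ ^ (2 : ℝ) = ENNReal.ofReal (f y ^ 2) := fun y => by
    rw [Real.enorm_eq_ofReal_abs, ENNReal.ofReal_rpow_of_nonneg (abs_nonneg _) zero_le_two,
      Real.rpow_two, sq_abs]
  rw [eLpNorm_eq_lintegral_rpow_enorm_toReal two_ne_zero ENNReal.ofNat_ne_top,
    ENNReal.toReal_ofNat, Real.sqrt_eq_rpow,
    ← ENNReal.ofReal_rpow_of_nonneg (integral_nonneg fun y => sq_nonneg _) (by norm_num),
    ofReal_integral_eq_lintegral_ofReal hf (.of_forall fun y => sq_nonneg _)]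
  simp_rw [hsq]

theorem lintegral_enorm_mul_le_eLpNorm_two {f g : α → ℝ} (hf : AEStronglyMeasurable f μ)
    (hg : AEStronglyMeasurable g μ) (hg_le : eLpNorm g 2 μ ≤ 1) :
    ∫⁻ y, ‖g y‖ₑ * ‖f y‖ₑ ∂μ ≤ eLpNorm f 2 μ :=
  calc ∫⁻ y, ‖g y‖ₑ * ‖f y‖ₑ ∂μ = eLpNorm (g • f) 1 μ := by
        simp [eLpNorm_one_eq_lintegral_enorm, enorm_mul]
    _ ≤ eLpNorm g 2 μ * eLpNorm f 2 μ := eLpNorm_smul_le_mul_eLpNorm hf hg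
    _ ≤ eLpNorm f 2 μ := mul_le_of_le_one_left' hg_le

theorem setLIntegral_enorm_mul_le_of_bound {f g : α → ℝ} {s : Set α} {C : ℝ}
    (hf : AEStronglyMeasurable f μ) (hg : AEStronglyMeasurable g μ) (hg_le : eLpNorm g 2 μ ≤ 1)
    (hfC : ∀ y, |f y| ≤ C) :
    ∫⁻ y in s, ‖g y‖ₑ * ‖f y‖ₑ ∂μ ≤ μ s ^ (2⁻¹ : ℝ) * ENNReal.ofReal C := by
  refine (lintegral_enorm_mul_le_eLpNorm_two hf.restrict hg.restrict
    ((eLpNorm_restrict_le _ _ _ _).trans hg_le)).trans ?_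
  simpa using eLpNorm_le_of_ae_bound (p := 2) (μ := μ.restrict s) (.of_forall hfC)

end General

theorem eLpNorm_restrict_comp_sub_left {G : Type*} [MeasurableSpace G] [AddGroup G]
    [MeasurableAdd G] [MeasurableNeg G] (μ : Measure G) [μ.IsAddLeftInvariant]
    [μ.IsNegInvariant] (f : G → ℝ) (p : ℝ≥0∞) (x : G) {s : Set G} (hs : MeasurableSet s) :
    eLpNorm (fun y => f (x - y)) p (μ.restrict ((x - ·) ⁻¹' s)) =
      eLpNorm f p (μ.restrict s) := by
  rw [← ((Measure.measurePreserving_sub_left μ x).restrict_preimage hs).map_eq]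
  exact (MeasurableEquiv.subLeft x).measurableEmbedding.eLpNorm_map_measure.symm

section Euclidean

variable {d : ℕ} {k : EuclideanSpace ℝ (Fin d) → EuclideanSpace ℝ (Fin d) → ℝ} {KL2 : ℝ}
  {P Q : Measure (EuclideanSpace ℝ (Fin d))}

local notation "E" => EuclideanSpace ℝ (Fin d)

theorem EuclideanSpace.volume_closedBall_fin (x : E) {R : ℝ} (hR : 0 ≤ R) :
    volume (closedBall x R) =
      ENNReal.ofReal (Real.pi ^ ((d : ℝ) / 2) * R ^ d / Real.Gamma ((d : ℝ) / 2 + 1)) := by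
  rcases d.eq_zero_or_pos with rfl | hd
  · rw [Subsingleton.eq_univ_of_nonempty ⟨x, mem_closedBall_self hR⟩,
      ← (PiLp.volume_preserving_toLp (Fin 0)).measure_preimage
        MeasurableSet.univ.nullMeasurableSet]
    simp [volume_pi]
  · have : Nonempty (Fin d) := ⟨⟨0, hd⟩⟩
    rw [EuclideanSpace.volume_closedBall, Fintype.card_fin, ← ENNReal.ofReal_pow hR,
      ← ENNReal.ofReal_mul (by positivity), Real.sqrt_eq_rpow,
      ← Real.rpow_natCast (Real.pi ^ _) d, ← Real.rpow_mul Real.pi_pos.le]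
    ring_nf

theorem setLIntegral_closedBall_enorm_mul_le {f g : E → ℝ} {R S : ℝ} (x : E) (hR : 0 ≤ R)
    (hf : AEStronglyMeasurable f volume) (hg : AEStronglyMeasurable g volume)
    (hg_le : eLpNorm g 2 volume ≤ 1) (hfS : ∀ y, |f y| ≤ S) :
    ∫⁻ y in closedBall x R, ‖g y‖ₑ * ‖f y‖ₑ ≤
      ENNReal.ofReal (S * √(Real.pi ^ ((d : ℝ) / 2) * R ^ d / Real.Gamma ((d : ℝ) / 2 + 1))) := by
  refine (setLIntegral_enorm_mul_le_of_bound hf hg hg_le hfS).trans_eq ?_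
  rw [EuclideanSpace.volume_closedBall_fin x hR,
    ENNReal.ofReal_rpow_of_nonneg (by positivity) (by norm_num), ← one_div, ← Real.sqrt_eq_rpow,
    ← ENNReal.ofReal_mul (Real.sqrt_nonneg _), mul_comm]

theorem kernelTail_nonneg (k : E → E → ℝ) (r : ℝ) : 0 ≤ kernelTail k r :=
  Real.iSup_nonneg fun _ => Real.sqrt_nonneg _

theorem sqrt_setIntegral_le_kernelTail (hL2int : ∀ x, Integrable (fun y => k x (x - y) ^ 2))
    (hKL2 : ∀ x, √(∫ y, k x (x - y) ^ 2) ≤ KL2) (x : E) (r : ℝ) :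
    √(∫ y in {y : E | r ≤ ‖y‖}, k x (x - y) ^ 2) ≤ kernelTail k r :=
  le_ciSup ⟨KL2, Set.forall_mem_range.2 fun x => (Real.sqrt_le_sqrt (setIntegral_le_integral
    (hL2int x) (.of_forall fun _ => sq_nonneg _))).trans (hKL2 x)⟩ x

theorem eLpNorm_restrict_le_of_sqrt_integral_le
    (hL2int : ∀ x, Integrable (fun y => k x (x - y) ^ 2))
    (hKL2 : ∀ x, √(∫ y, k x (x - y) ^ 2) ≤ KL2) (x : E) (s : Set E) :
    eLpNorm (k x) 2 (volume.restrict s) ≤ ENNReal.ofReal KL2 :=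
  calc eLpNorm (k x) 2 (volume.restrict s)
      ≤ eLpNorm (k x) 2 volume := eLpNorm_restrict_le _ _ _ _
    _ = eLpNorm (fun y => k x (x - y)) 2 volume := by
      simpa using (eLpNorm_restrict_comp_sub_left volume (k x) 2 x MeasurableSet.univ).symm
    _ = ENNReal.ofReal √(∫ y, k x (x - y) ^ 2) :=
      eLpNorm_two_eq_ofReal_sqrt_integral_sq (hL2int x)
    _ ≤ ENNReal.ofReal KL2 := ENNReal.ofReal_le_ofReal (hKL2 x)

theorem eLpNorm_restrict_compl_closedBall_le_kernelTail
    (hL2int : ∀ x, Integrable (fun y => k x (x - y) ^ 2))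
    (hKL2 : ∀ x, √(∫ y, k x (x - y) ^ 2) ≤ KL2) {R a b : ℝ} (hab : a + b = 1) {x : E}
    (hx : ‖x‖ ≤ b * R) :
    eLpNorm (k x) 2 (volume.restrict (closedBall 0 R)ᶜ) ≤
      ENNReal.ofReal (kernelTail k (a * R)) := by
  have hsub : (x - ·) ⁻¹' (closedBall (0 : E) R)ᶜ ⊆ {y | a * R ≤ ‖y‖} := fun y hy => by
    have hxy : R < ‖x - y‖ := by simpa using hy
    have hR : a * R + b * R = R := by rw [← add_mul, hab, one_mul]
    show a * R ≤ ‖y‖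
    linarith [norm_sub_le x y]
  calc eLpNorm (k x) 2 (volume.restrict (closedBall 0 R)ᶜ)
      = eLpNorm (fun y => k x (x - y)) 2
          (volume.restrict ((x - ·) ⁻¹' (closedBall 0 R)ᶜ)) :=
        (eLpNorm_restrict_comp_sub_left _ _ _ _ measurableSet_closedBall.compl).symm
    _ ≤ eLpNorm (fun y => k x (x - y)) 2 (volume.restrict {y | a * R ≤ ‖y‖}) :=
        eLpNorm_mono_measure _ (Measure.restrict_mono_set _ hsub)
    _ = ENNReal.ofReal √(∫ y in {y : E | a * R ≤ ‖y‖}, k x (x - y) ^ 2) :=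
        eLpNorm_two_eq_ofReal_sqrt_integral_sq (hL2int x).integrableOn
    _ ≤ ENNReal.ofReal (kernelTail k (a * R)) :=
        ENNReal.ofReal_le_ofReal (sqrt_setIntegral_le_kernelTail hL2int hKL2 x _)

theorem eLpNorm_restrict_compl_closedBall_le
    (hL2int : ∀ x, Integrable (fun y => k x (x - y) ^ 2))
    (hKL2 : ∀ x, √(∫ y, k x (x - y) ^ 2) ≤ KL2) {R a b : ℝ} (hab : a + b = 1) (x : E) :
    eLpNorm (k x) 2 (volume.restrict (closedBall 0 R)ᶜ) ≤
      ENNReal.ofReal (kernelTail k (a * R)) +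
        {x : E | b * R ≤ ‖x‖}.indicator (fun _ => ENNReal.ofReal KL2) x := by
  by_cases hx : x ∈ {x : E | b * R ≤ ‖x‖}
  · rw [Set.indicator_of_mem hx]
    exact (eLpNorm_restrict_le_of_sqrt_integral_le hL2int hKL2 x _).trans le_add_self
  · rw [Set.indicator_of_notMem hx, add_zero]
    exact eLpNorm_restrict_compl_closedBall_le_kernelTail hL2int hKL2 hab (not_le.1 hx).le

theorem setLIntegral_compl_closedBall_mul_lintegral_le (ν : Measure E) [SFinite ν]
    (hmeas : Measurable (Function.uncurry k))
    (hL2int : ∀ x, Integrable (fun y => k x (x - y) ^ 2))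
    (hKL2 : ∀ x, √(∫ y, k x (x - y) ^ 2) ≤ KL2) {g : E → ℝ} (hgmeas : Measurable g)
    (hg_le : eLpNorm g 2 volume ≤ 1) {R a b : ℝ} (hab : a + b = 1) :
    ∫⁻ y in (closedBall 0 R)ᶜ, ‖g y‖ₑ * ∫⁻ x, ‖k x y‖ₑ ∂ν ≤
      ENNReal.ofReal (kernelTail k (a * R)) * ν Set.univ +
        ENNReal.ofReal KL2 * ν {x | b * R ≤ ‖x‖} :=
  calc ∫⁻ y in (closedBall 0 R)ᶜ, ‖g y‖ₑ * ∫⁻ x, ‖k x y‖ₑ ∂ν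
      = ∫⁻ y in (closedBall 0 R)ᶜ, ∫⁻ x, ‖g y‖ₑ * ‖k x y‖ₑ ∂ν := by
        simp_rw [lintegral_const_mul' _ _ enorm_ne_top]
    _ = ∫⁻ x, (∫⁻ y in (closedBall 0 R)ᶜ, ‖g y‖ₑ * ‖k x y‖ₑ) ∂ν :=
        lintegral_lintegral_swap ((hgmeas.comp measurable_fst).enorm.mul
          (hmeas.comp measurable_swap).enorm).aemeasurable
    _ ≤ ∫⁻ x, eLpNorm (k x) 2 (volume.restrict (closedBall 0 R)ᶜ) ∂ν :=
        lintegral_mono fun x => lintegral_enorm_mul_le_eLpNorm_two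
          hmeas.of_uncurry_left.aestronglyMeasurable hgmeas.aestronglyMeasurable
          ((eLpNorm_restrict_le _ _ _ _).trans hg_le)
    _ ≤ ∫⁻ x, ENNReal.ofReal (kernelTail k (a * R)) +
          {x : E | b * R ≤ ‖x‖}.indicator (fun _ => ENNReal.ofReal KL2) x ∂ν :=
        lintegral_mono (eLpNorm_restrict_compl_closedBall_le hL2int hKL2 hab)
    _ = ENNReal.ofReal (kernelTail k (a * R)) * ν Set.univ +
          ENNReal.ofReal KL2 * ν {x | b * R ≤ ‖x‖} := by
        rw [lintegral_add_left measurable_const, lintegral_const,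
          lintegral_indicator_const (measurableSet_le measurable_const measurable_norm)]

theorem stronglyMeasurable_meanEmbed [SFinite P] (hmeas : Measurable (Function.uncurry k)) :
    StronglyMeasurable (meanEmbed P k) :=
  hmeas.stronglyMeasurable.integral_prod_left

theorem enorm_meanEmbed_sub_le (y : E) :
    ‖meanEmbed P k y - meanEmbed Q k y‖ₑ ≤ ∫⁻ x, ‖k x y‖ₑ ∂(P + Q) := by
  rw [lintegral_add_measure]
  exact enorm_sub_le.trans (add_le_add (enorm_integral_le_lintegral_enorm _)
    (enorm_integral_le_lintegral_enorm _))

theorem setLIntegral_compl_closedBall_enorm_mul_meanEmbed_sub_le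
    [IsProbabilityMeasure P] [IsProbabilityMeasure Q] (hmeas : Measurable (Function.uncurry k))
    (hL2int : ∀ x, Integrable (fun y => k x (x - y) ^ 2))
    (hKL2 : ∀ x, √(∫ y, k x (x - y) ^ 2) ≤ KL2) {g : E → ℝ} (hgmeas : Measurable g)
    (hg_le : eLpNorm g 2 volume ≤ 1) {R a b : ℝ} (hab : a + b = 1) :
    ∫⁻ y in (closedBall 0 R)ᶜ, ‖g y‖ₑ * ‖meanEmbed P k y - meanEmbed Q k y‖ₑ ≤
      ENNReal.ofReal (2 * kernelTail k (a * R) +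
        2 * KL2 * max (measTail P (b * R)) (measTail Q (b * R))) := by
  have hKL2_0 : 0 ≤ KL2 := (Real.sqrt_nonneg _).trans (hKL2 0)
  have hτ0 := kernelTail_nonneg k (a * R)
  have hsum : measTail P (b * R) + measTail Q (b * R) ≤
      2 * max (measTail P (b * R)) (measTail Q (b * R)) := by
    rw [two_mul]
    exact add_le_add (le_max_left _ _) (le_max_right _ _)
  calc ∫⁻ y in (closedBall 0 R)ᶜ, ‖g y‖ₑ * ‖meanEmbed P k y - meanEmbed Q k y‖ₑ
      ≤ ∫⁻ y in (closedBall 0 R)ᶜ, ‖g y‖ₑ * ∫⁻ x, ‖k x y‖ₑ ∂(P + Q) := by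
        gcongr with y
        exact enorm_meanEmbed_sub_le y
    _ ≤ ENNReal.ofReal (kernelTail k (a * R)) * (P + Q) Set.univ +
          ENNReal.ofReal KL2 * (P + Q) {x | b * R ≤ ‖x‖} :=
        setLIntegral_compl_closedBall_mul_lintegral_le (P + Q) hmeas hL2int hKL2 hgmeas hg_le
          hab
    _ = ENNReal.ofReal (2 * kernelTail k (a * R) +
          KL2 * (measTail P (b * R) + measTail Q (b * R))) := by
        rw [measTail, measTail, ENNReal.ofReal_add (by positivity) (by positivity),
          ENNReal.ofReal_mul zero_le_two, ENNReal.ofReal_mul hKL2_0,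
          ENNReal.ofReal_add ENNReal.toReal_nonneg ENNReal.toReal_nonneg,
          ENNReal.ofReal_toReal (measure_ne_top _ _), ENNReal.ofReal_toReal (measure_ne_top _ _),
          Measure.add_apply, Measure.add_apply, measure_univ, measure_univ, one_add_one_eq_two,
          ENNReal.ofReal_ofNat, mul_comm]
    _ ≤ _ := ENNReal.ofReal_le_ofReal (by linarith [mul_le_mul_of_nonneg_left hsum hKL2_0])

end Euclidean

theorem kernel_integral_error_le_linf_error_general {d : ℕ}
    (k : EuclideanSpace ℝ (Fin d) → EuclideanSpace ℝ (Fin d) → ℝ)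
    (hmeas : Measurable (Function.uncurry k))
    (hL2int : ∀ x, Integrable (fun y => (k x (x - y)) ^ 2))
    (KL2 : ℝ) (hKL2 : ∀ x, Real.sqrt (∫ y, (k x (x - y)) ^ 2) ≤ KL2)
    (P Q : Measure (EuclideanSpace ℝ (Fin d)))
    [IsProbabilityMeasure P] [IsProbabilityMeasure Q]
    (g : EuclideanSpace ℝ (Fin d) → ℝ) (hgmeas : Measurable g)
    (hgsqint : Integrable (fun y => (g y) ^ 2))
    (hg : (∫ y, (g y) ^ 2) ≤ 1)
    (R a b : ℝ) (hR : 0 ≤ R) (hab : a + b = 1)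
    (S : ℝ) (hS : ∀ y, |meanEmbed P k y - meanEmbed Q k y| ≤ S) :
    |∫ y, g y * (meanEmbed P k y - meanEmbed Q k y)|
      ≤ S * Real.sqrt (Real.pi ^ ((d : ℝ) / 2) * R ^ (d : ℕ) / Real.Gamma ((d : ℝ) / 2 + 1))
        + 2 * kernelTail k (a * R)
        + 2 * KL2 * max (measTail P (b * R)) (measTail Q (b * R)) := by
  have hg_le : eLpNorm g 2 volume ≤ 1 := by
    rw [eLpNorm_two_eq_ofReal_sqrt_integral_sq hgsqint]
    exact ENNReal.ofReal_le_one.2 (Real.sqrt_le_one.2 hg)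
  have hball := setLIntegral_closedBall_enorm_mul_le 0 hR
    ((stronglyMeasurable_meanEmbed hmeas).sub
      (stronglyMeasurable_meanEmbed hmeas)).aestronglyMeasurable
    hgmeas.aestronglyMeasurable hg_le hS
  have htail := setLIntegral_compl_closedBall_enorm_mul_meanEmbed_sub_le (P := P) (Q := Q)
    hmeas hL2int hKL2 hgmeas hg_le (R := R) hab
  have hS0 : 0 ≤ S := (abs_nonneg _).trans (hS 0)
  have hKL2_0 : 0 ≤ KL2 := (Real.sqrt_nonneg _).trans (hKL2 0)
  have hτ0 := kernelTail_nonneg k (a * R)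
  have hmax0 : 0 ≤ max (measTail P (b * R)) (measTail Q (b * R)) :=
    le_max_of_le_left ENNReal.toReal_nonneg
  rw [← Real.norm_eq_abs, ← toReal_enorm, add_assoc]
  refine ENNReal.toReal_le_of_le_ofReal (by positivity) ?_
  calc ‖∫ y, g y * (meanEmbed P k y - meanEmbed Q k y)‖ₑ
      ≤ ∫⁻ y, ‖g y‖ₑ * ‖meanEmbed P k y - meanEmbed Q k y‖ₑ := by
        simp_rw [← enorm_mul]
        exact enorm_integral_le_lintegral_enorm _
    _ = (∫⁻ y in closedBall 0 R, ‖g y‖ₑ * ‖meanEmbed P k y - meanEmbed Q k y‖ₑ) +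
          ∫⁻ y in (closedBall 0 R)ᶜ, ‖g y‖ₑ * ‖meanEmbed P k y - meanEmbed Q k y‖ₑ :=
        (lintegral_add_compl _ measurableSet_closedBall).symm
    _ ≤ _ := add_le_add hball htail
    _ = _ := (ENNReal.ofReal_add (by positivity) (by positivity)).symm

/-- Relating kernel integral error with L∞ error: for `‖g‖_{L²} ≤ 1`,
`sup_x (∫ k(x,x−y)² dy)^{1/2} ≤ K_{L²}`, a uniform bound `S` on `|Pk − Qk|`,
`R ≥ 0`, and `a + b = 1` with `a, b ≥ 0`,
`|∫ g(y)(Pk(y) − Qk(y)) dy| ≤ S · Vol(R)^{1/2} + 2τ_k(aR) + 2K_{L²} max(τ_P(bR), τ_Q(bR))`,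
where `Vol(R) = π^{d/2} R^d / Γ(d/2+1)`. -/
theorem kernel_integral_error_le_linf_error {d : ℕ} (hd : 1 ≤ d)
    (k : EuclideanSpace ℝ (Fin d) → EuclideanSpace ℝ (Fin d) → ℝ)
    (hmeas : Measurable (Function.uncurry k))
    (hL2int : ∀ x, Integrable (fun y => (k x (x - y)) ^ 2))
    (KL2 : ℝ) (hKL2 : ∀ x, Real.sqrt (∫ y, (k x (x - y)) ^ 2) ≤ KL2)
    (P Q : Measure (EuclideanSpace ℝ (Fin d)))
    [IsProbabilityMeasure P] [IsProbabilityMeasure Q]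
    (hPint : ∀ y, Integrable (fun x => k x y) P)
    (hQint : ∀ y, Integrable (fun x => k x y) Q)
    (g : EuclideanSpace ℝ (Fin d) → ℝ) (hgmeas : Measurable g)
    (hgsqint : Integrable (fun y => (g y) ^ 2))
    (hg : (∫ y, (g y) ^ 2) ≤ 1)
    (R a b : ℝ) (hR : 0 ≤ R) (ha : 0 ≤ a) (hb : 0 ≤ b) (hab : a + b = 1)
    (S : ℝ) (hS : ∀ y, |meanEmbed P k y - meanEmbed Q k y| ≤ S) :
    |∫ y, g y * (meanEmbed P k y - meanEmbed Q k y)|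
      ≤ S * Real.sqrt (Real.pi ^ ((d : ℝ) / 2) * R ^ (d : ℕ) / Real.Gamma ((d : ℝ) / 2 + 1))
        + 2 * kernelTail k (a * R)
        + 2 * KL2 * max (measTail P (b * R)) (measTail Q (b * R)) :=
  kernel_integral_error_le_linf_error_general k hmeas hL2int KL2 hKL2 P Q g hgmeas hgsqint hg R a b
    hR hab S hS
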